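/- arXiv:2406.17217 — 2 statements merged into one kernel-verified Lean document; each statement's English description precedes it below -/
import Mathlib

section
/- Assume there exists a Ramsey ultrafilter on ℕ. Then for every A ⊆ βω with |A| < 𝔠, the space βω ∖ A, with the subspace topology, is doubly countably compact. -/
/-- An ultrafilter on ℕ is free (nonprincipal) if it contains no finite set. -/
def IsFree (p : Ultrafilter ℕ) : Prop := ∀ A : Set ℕ, A.Finite → A ∉ p

/-- The Fubini product `p ⊗ q` of ultrafilters on ℕ:
`A ∈ p ⊗ q ↔ {n | {m | (n, m) ∈ A} ∈ q} ∈ p`. -/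
def fubini (p q : Ultrafilter ℕ) : Ultrafilter (ℕ × ℕ) :=
  p.bind fun n => q.map fun m => (n, m)

/-- A free ultrafilter `u` on ℕ is Ramsey if for every partition `{P n : n ∈ ℕ}` of ℕ,
either some `P i ∈ u`, or there is `U ∈ u` meeting each `P n` in at most one point. -/
def IsRamsey (u : Ultrafilter ℕ) : Prop :=
  IsFree u ∧ ∀ P : ℕ → Set ℕ, (Pairwise fun i j => Disjoint (P i) (P j)) →
    (⋃ i, P i) = Set.univ →
    (∃ i, P i ∈ u) ∨ ∃ U ∈ u, ∀ n, (U ∩ P n).Subsingleton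

/-- A topological space `X` is doubly countably compact if every double sequence
`(f n m)_{n<m}` has a double `p`-limit for some free ultrafilter `p`: there are `A ∈ p`,
points `xn n ∈ X` for `n ∈ A` and `x ∈ X` such that `xn n` is the `p`-limit of
`(f n m)_{m>n}` for each `n ∈ A`, and `x` is the `p`-limit of `(xn n)_{n∈A}`. -/
def DoublyCountablyCompact (X : Type*) [TopologicalSpace X] : Prop :=
  ∀ f : ℕ → ℕ → X, ∃ p : Ultrafilter ℕ, IsFree p ∧ ∃ A ∈ p, ∃ xn : ℕ → X, ∃ x : X,
    (∀ n ∈ A, ∀ U : Set X, IsOpen U → xn n ∈ U → {m : ℕ | n < m ∧ f n m ∈ U} ∈ p) ∧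
    (∀ U : Set X, IsOpen U → x ∈ U → {n : ℕ | n ∈ A ∧ xn n ∈ U} ∈ p)

open Set Filter

abbrev bw := Ultrafilter ℕ

lemma mem_bind'' {p : Ultrafilter ℕ} {g : ℕ → bw} {s : Set ℕ} :
    s ∈ p.bind g ↔ {n | s ∈ g n} ∈ p := Iff.rfl

lemma bind_const {p : Ultrafilter ℕ} {c : bw} : p.bind (fun _ => c) = c := by
  ext s
  rw [mem_bind'']
  by_cases h : s ∈ c <;> simp [h]; exact Filter.univ_mem

lemma memsup {p : Ultrafilter ℕ} {s t : Set ℕ} (h : s ∈ p) (hst : s ⊆ t) : t ∈ p :=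
  Ultrafilter.mem_coe.1 (Filter.mem_of_superset (Ultrafilter.mem_coe.2 h) hst)

lemma bind_congr' {p : Ultrafilter ℕ} {g h : ℕ → bw} {S : Set ℕ} (hS : S ∈ p)
    (hgh : ∀ n ∈ S, g n = h n) : p.bind g = p.bind h := by
  ext s
  rw [mem_bind'', mem_bind'']
  constructor <;> intro hm
  · exact memsup (Filter.inter_mem hm hS) (fun n ⟨h1, h2⟩ => by
      simpa [← hgh n h2] using h1)
  · exact memsup (Filter.inter_mem hm hS) (fun n ⟨h1, h2⟩ => by
      simpa [hgh n h2] using h1)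

lemma not_both_disjoint {p : Ultrafilter ℕ} {s t : Set ℕ} (h : s ∩ t = ∅) (hs : s ∈ p) : t ∉ p := by
  intro ht
  have h2 : s ∩ t ∈ p := Filter.inter_mem hs ht
  rw [h] at h2
  exact Ultrafilter.empty_notMem h2

lemma exists_basic {U : Set bw} (hU : IsOpen U) {q : bw} (hq : q ∈ U) :
    ∃ s ∈ q, {r : bw | s ∈ r} ⊆ U := by
  obtain ⟨v, hv, hqv, hvU⟩ := ultrafilterBasis_is_basis.exists_subset_of_mem_open hq hU
  obtain ⟨s, rfl⟩ := hv
  exact ⟨s, hqv, hvU⟩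


lemma free_cofinite {p : Ultrafilter ℕ} (hp : IsFree p) {s : Set ℕ} (hs : sᶜ.Finite) : s ∈ p := by
  have := hp _ hs
  rwa [Ultrafilter.compl_mem_iff_notMem, not_not] at this

lemma mem_infinite {p : Ultrafilter ℕ} (hp : IsFree p) {s : Set ℕ} (hs : s ∈ p) : s.Infinite := by
  intro hfin
  exact hp s hfin hs

lemma exists_free_contains {D : Set ℕ} (hD : D.Infinite) :
    ∃ p : Ultrafilter ℕ, IsFree p ∧ D ∈ p := by
  have hne : (Filter.cofinite ⊓ Filter.principal D).NeBot := by
    rw [Filter.inf_principal_neBot_iff]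
    intro U hU
    have hUf : Uᶜ.Finite := hU
    have : (D \ Uᶜ).Infinite := hD.diff hUf
    have h3 : D \ Uᶜ ⊆ U ∩ D := fun x hx => ⟨not_not.1 hx.2, hx.1⟩
    exact (this.mono h3).nonempty
  refine ⟨Ultrafilter.of (Filter.cofinite ⊓ Filter.principal D), ?_, ?_⟩
  · intro S hS hSp
    have h1 : Sᶜ ∈ Filter.cofinite := by simpa using hS
    have h2 : Sᶜ ∈ Ultrafilter.of (Filter.cofinite ⊓ Filter.principal D) :=
      Ultrafilter.of_le _ (Filter.mem_inf_of_left h1)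
    exact (Ultrafilter.compl_mem_iff_notMem.1 h2) hSp
  · exact Ultrafilter.of_le _ (Filter.mem_inf_of_right (Filter.mem_principal_self D))

noncomputable def encList (x : ℕ → Bool) (k : ℕ) : ℕ :=
  Encodable.encode ((List.range k).map x)

lemma encList_inj {x y : ℕ → Bool} {k k' : ℕ} (h : encList x k = encList y k') :
    k = k' ∧ ∀ i < k, x i = y i := by
  have hl : (List.range k).map x = (List.range k').map y := Encodable.encode_injective h
  have hk : k = k' := by
    have := congrArg List.length hl
    simpa using this
  subst hk
  refine ⟨rfl, fun i hi => ?_⟩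
  have := congrArg (fun l => l.getD i false) hl
  simp only [List.getD_eq_getElem?_getD] at this
  rwa [List.getElem?_map, List.getElem?_map, List.getElem?_range hi,
    Option.map_some, Option.map_some, Option.getD_some, Option.getD_some] at this

lemma exists_family {X : Set ℕ} (hX : X.Infinite) :
    ∃ P : (ℕ → Bool) → Ultrafilter ℕ,
      (∀ x, IsFree (P x) ∧ X ∈ P x) ∧
      ∀ x y, x ≠ y → ∃ E, E ⊆ X ∧ E ∈ P x ∧ E ∉ P y := by
  classical
  let j : ℕ → ℕ := fun n => (Set.Infinite.natEmbedding X hX n : ℕ)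
  have hjX : ∀ n, j n ∈ X := fun n => (Set.Infinite.natEmbedding X hX n).2
  have hjinj : Function.Injective j := fun a b h => by
    have := (Set.Infinite.natEmbedding X hX).injective (Subtype.ext h)
    exact this
  let d : (ℕ → Bool) → ℕ → ℕ := fun x k => j (encList x k)
  have hdinj : ∀ x, Function.Injective (d x) := by
    intro x a b h
    exact ((encList_inj (hjinj h)).1)
  have hDinf : ∀ x, (Set.range (d x)).Infinite :=
    fun x => Set.infinite_range_of_injective (hdinj x)
  have hDX : ∀ x, Set.range (d x) ⊆ X := by
    rintro x n ⟨k, rfl⟩; exact hjX _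
  have hAD : ∀ x y, x ≠ y → (Set.range (d x) ∩ Set.range (d y)).Finite := by
    intro x y hxy
    have hex : ∃ k, x k ≠ y k := by
      by_contra hc
      push_neg at hc
      exact hxy (funext hc)
    set k0 := Nat.find hex with hk0
    have hsub : Set.range (d x) ∩ Set.range (d y) ⊆ (d x) '' {k | k ≤ k0} := by
      rintro n ⟨⟨k, rfl⟩, ⟨k', hk'⟩⟩
      obtain ⟨hkk, hpre⟩ := encList_inj (hjinj hk'.symm)
      subst hkk
      refine ⟨k, ?_, rfl⟩
      simp only [Set.mem_setOf_eq]
      by_contra hlt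
      push_neg at hlt
      exact (Nat.find_spec hex) (hpre k0 (by omega))
    exact Set.Finite.subset (Set.Finite.image _ (Set.finite_Iic k0)) hsub
  choose P hPfree hPmem using fun x : ℕ → Bool => exists_free_contains (hDinf x)
  refine ⟨P, fun x => ⟨hPfree x, memsup (hPmem x) (hDX x)⟩, ?_⟩
  intro x y hxy
  refine ⟨Set.range (d x), hDX x, hPmem x, ?_⟩
  intro hmem
  have : Set.range (d x) ∩ Set.range (d y) ∈ P y := Filter.inter_mem hmem (hPmem y)
  exact hPfree y _ (hAD x y hxy) this

lemma ne_ultra {p q : bw} (h : p ≠ q) : ∃ s, s ∈ p ∧ sᶜ ∈ q := by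
  by_contra hc
  push_neg at hc
  have hle : (q : Filter ℕ) ≤ (p : Filter ℕ) := by
    intro s hs
    have := hc s hs
    rw [Ultrafilter.compl_mem_iff_notMem] at this
    exact not_not.1 (by simpa using this)
  exact h (Ultrafilter.coe_le_coe.1 hle).symm

/-- Selectivity: every function is constant or injective on a set in a Ramsey ultrafilter. -/
lemma selective {u : Ultrafilter ℕ} (hu : IsRamsey u) {α : Type*} (y : ℕ → α) :
    ∃ U ∈ u, (∃ c, ∀ n ∈ U, y n = c) ∨ (∀ n ∈ U, ∀ m ∈ U, y n = y m → n = m) := by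
  classical
  set P : ℕ → Set ℕ := fun i => {j | y j = y i ∧ ∀ i' < i, y i' ≠ y i} with hP
  have hdisj : Pairwise fun i j => Disjoint (P i) (P j) := by
    intro i j hij
    rw [Set.disjoint_left]
    rintro k ⟨hk1, hk2⟩ ⟨hk1', hk2'⟩
    rcases Nat.lt_or_ge i j with h | h
    · exact hk2' i h (hk1 ▸ hk1')
    · exact hk2 j (lt_of_le_of_ne h (Ne.symm hij)) (hk1' ▸ hk1)
  have hcov : (⋃ i, P i) = Set.univ := by
    ext k
    simp only [Set.mem_iUnion, Set.mem_univ, iff_true]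
    have hex : ∃ i, y i = y k := ⟨k, rfl⟩
    refine ⟨Nat.find hex, ?_, ?_⟩
    · exact (Nat.find_spec hex).symm
    · intro i' hi' hiy
      exact Nat.find_min hex hi' (hiy.trans (Nat.find_spec hex))
  rcases hu.2 P hdisj hcov with ⟨i, hi⟩ | ⟨U, hU, hsel⟩
  · refine ⟨P i, hi, Or.inl ⟨y i, fun n hn => hn.1⟩⟩
  · refine ⟨U, hU, Or.inr ?_⟩
    intro n hn m hm hnm
    have hex : ∃ i, y i = y n := ⟨n, rfl⟩
    set i := Nat.find hex
    have hmem : ∀ j, y j = y n → j ∈ P i := by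
      intro j hj
      refine ⟨hj.trans (Nat.find_spec hex).symm, fun i' hi' hiy => ?_⟩
      exact Nat.find_min hex hi' (hiy.trans (Nat.find_spec hex))
    exact hsel i ⟨hn, hmem n rfl⟩ ⟨hm, hmem m hnm.symm⟩

/-- Finitely many pairwise distinct ultrafilters have pairwise disjoint members. -/
lemma finite_disjointify (g : ℕ → bw) (k : ℕ) (S : Set ℕ)
    (hdist : ∀ i ∈ S, ∀ j ∈ S, i < k → j < k → i ≠ j → g i ≠ g j) :
    ∃ v : ℕ → Set ℕ, (∀ i ∈ S, i < k → v i ∈ g i) ∧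
      ∀ i ∈ S, ∀ j ∈ S, i < k → j < k → i ≠ j → v i ∩ v j = ∅ := by
  classical
  have hc : ∀ i j : ℕ, ∃ s : Set ℕ,
      (i ∈ S → j ∈ S → i < k → j < k → i ≠ j → s ∈ g i ∧ sᶜ ∈ g j) := by
    intro i j
    by_cases h : i ∈ S ∧ j ∈ S ∧ i < k ∧ j < k ∧ i ≠ j
    · obtain ⟨s, hs⟩ := ne_ultra (hdist i h.1 j h.2.1 h.2.2.1 h.2.2.2.1 h.2.2.2.2)
      exact ⟨s, fun _ _ _ _ _ => hs⟩
    · exact ⟨∅, fun h1 h2 h3 h4 h5 => absurd ⟨h1, h2, h3, h4, h5⟩ h⟩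
  choose c hcspec using hc
  set v : ℕ → Set ℕ := fun i =>
    (⋂ j ∈ {j | j ∈ S ∧ j < k ∧ j ≠ i}, c i j) ∩
      (⋂ j ∈ {j | j ∈ S ∧ j < k ∧ j ≠ i}, (c j i)ᶜ) with hv
  have hfin : ∀ i : ℕ, ({j | j ∈ S ∧ j < k ∧ j ≠ i} : Set ℕ).Finite := by
    intro i
    exact Set.Finite.subset (Set.finite_Iio k) (fun j hj => hj.2.1)
  refine ⟨v, ?_, ?_⟩
  · intro i hiS hi
    refine Filter.inter_mem ?_ ?_
    · rw [Filter.biInter_mem (hfin i)]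
      intro j hj
      exact (hcspec i j hiS hj.1 hi hj.2.1 (Ne.symm hj.2.2)).1
    · rw [Filter.biInter_mem (hfin i)]
      intro j hj
      exact (hcspec j i hj.1 hiS hj.2.1 hi hj.2.2).2
  · intro i hiS j hjS hi hj hij
    apply Set.eq_empty_of_subset_empty
    intro x ⟨hxi, hxj⟩
    have h1 : x ∈ c i j := by
      have := hxi.1
      simp only [Set.mem_iInter] at this
      exact this j ⟨hjS, hj, Ne.symm hij⟩
    have h2 : x ∈ (c i j)ᶜ := by
      have := hxj.2
      simp only [Set.mem_iInter] at this
      exact this i ⟨hiS, hi, hij⟩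
    exact h2 h1

/-- Diagonalization for Ramsey ultrafilters. -/
lemma diagonalize {u : Ultrafilter ℕ} (hu : IsRamsey u) (B : ℕ → Set ℕ) (hB : ∀ k, B k ∈ u) :
    ∃ X ∈ u, ∀ k ∈ X, ∀ m ∈ X, k < m → m ∈ B k := by
  classical
  set B' : ℕ → Set ℕ := fun k => ⋂ j ∈ Set.Iic k, B j with hB'def
  have hB'mem : ∀ k, B' k ∈ u := by
    intro k
    show (⋂ j ∈ Set.Iic k, B j) ∈ (u : Filter ℕ)
    rw [Filter.biInter_mem (Set.finite_Iic k)]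
    exact fun j _ => hB j
  have hB'sub : ∀ k, B' k ⊆ B k := by
    intro k m hm
    simp only [hB'def, Set.mem_iInter] at hm
    exact hm k (le_refl k)
  have hB'anti : ∀ k k', k ≤ k' → B' k' ⊆ B' k := by
    intro k k' hkk m hm
    simp only [hB'def, Set.mem_iInter] at hm ⊢
    exact fun j hj => hm j (le_trans hj hkk)
  set I : Set ℕ := {m | ∀ k, m ∈ B' k} with hIdef
  by_cases hI : I ∈ u
  · exact ⟨I, hI, fun k _ m hm _ => hB'sub k (hm k)⟩
  -- main case
  have hIc : Iᶜ ∈ u := Ultrafilter.compl_mem_iff_notMem.2 hI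
  set B'' : ℕ → Set ℕ := fun k => B' k ∩ Iᶜ with hB''def
  have hB''mem : ∀ k, B'' k ∈ u := fun k => Filter.inter_mem (hB'mem k) hIc
  have hB''anti : ∀ k k', k ≤ k' → B'' k' ⊆ B'' k :=
    fun k k' hkk m hm => ⟨hB'anti k k' hkk hm.1, hm.2⟩
  have hex : ∀ m, ∃ k, m ∉ B'' k := by
    intro m
    by_cases hmI : m ∈ I
    · exact ⟨0, fun hc => hc.2 hmI⟩
    · obtain ⟨k, hk⟩ : ∃ k, m ∉ B' k := by
        by_contra hc
        push_neg at hc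
        exact hmI hc
      exact ⟨k, fun hc => hk hc.1⟩
  set h : ℕ → ℕ := fun m => Nat.find (hex m) with hdef
  have hkey : ∀ m k, (m ∈ B'' k ↔ k < h m) := by
    intro m k
    constructor
    · intro hm
      by_contra hc
      push_neg at hc
      exact (Nat.find_spec (hex m)) (hB''anti (h m) k hc hm)
    · intro hk
      have := Nat.find_min (hex m) hk
      exact not_not.1 this
  -- h is injective on a set in u
  obtain ⟨U, hUu, hUcase⟩ := selective hu h
  have hUinj : ∀ m ∈ U, ∀ m' ∈ U, h m = h m' → m = m' := by
    rcases hUcase with ⟨c, hc⟩ | hinj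
    · exfalso
      have h1 : U ∩ B'' (c + 1) ∈ u := Filter.inter_mem hUu (hB''mem (c+1))
      obtain ⟨m, hmU, hmB⟩ := Ultrafilter.nonempty_of_mem h1
      have := (hkey m (c+1)).1 hmB
      rw [hc m hmU] at this
      omega
    · exact hinj
  -- finiteness of h-bounded subsets of U
  have hfinS : ∀ b : ℕ, ({m | m ∈ U ∧ h m ≤ b}).Finite := by
    intro b
    apply Set.Finite.of_finite_image (f := h)
    · exact Set.Finite.subset (Set.finite_Iic b) (by rintro x ⟨m, hm, rfl⟩; exact hm.2)
    · intro a ha a' ha' haa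
      exact hUinj a ha.1 a' ha'.1 haa
  set bound : ℕ → ℕ := fun b => (hfinS b).toFinset.sup id with hbound
  set c : ℕ → ℕ := fun k => Nat.rec 0 (fun _ ck => ck + 1 + bound ck) k with hcdef
  have hc0 : c 0 = 0 := rfl
  have hcsucc : ∀ k, c (k+1) = c k + 1 + bound (c k) := fun k => rfl
  have hcmono : StrictMono c := strictMono_nat_of_lt_succ (fun k => by rw [hcsucc]; omega)
  have hstar : ∀ j m, m ∈ U → c (j+1) ≤ m → c j < h m := by
    intro j m hmU hcm
    by_contra hc2
    push_neg at hc2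
    have hmS : m ∈ {m | m ∈ U ∧ h m ≤ c j} := ⟨hmU, hc2⟩
    have : m ≤ bound (c j) := by
      have hmem := (hfinS (c j)).mem_toFinset.2 hmS
      exact Finset.le_sup (f := id) hmem
    rw [hcsucc] at hcm
    omega
  -- interval index
  have hexJ : ∀ n : ℕ, ∃ j, n < c (j+1) := by
    intro n
    refine ⟨n, lt_of_lt_of_le (Nat.lt_succ_self n) ?_⟩
    exact hcmono.le_apply
  set J : ℕ → ℕ := fun n => Nat.find (hexJ n) with hJdef
  have hJ2 : ∀ n, n < c (J n + 1) := fun n => Nat.find_spec (hexJ n)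
  have hJ1 : ∀ n, c (J n) ≤ n := by
    intro n
    rcases Nat.eq_zero_or_eq_succ_pred (J n) with h0 | hs
    · rw [h0, hc0]; omega
    · rw [hs]
      have := Nat.find_min (hexJ n) (show J n - 1 < J n by omega)
      push_neg at this
      have h2 : J n - 1 + 1 = J n := by omega
      rw [← h2] at hs ⊢
      simpa using this
  -- selectors for double-interval partitions
  obtain ⟨X₁, hX₁u, hX₁case⟩ := selective hu (fun m => J m / 2)
  obtain ⟨X₂, hX₂u, hX₂case⟩ := selective hu (fun m => (J m + 1) / 2)
  have hfinJ : ∀ b : ℕ, ({m | J m ≤ b}).Finite := by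
    intro b
    apply Set.Finite.subset (Set.finite_Iio (c (b+1)))
    intro m hm
    have hm' : J m ≤ b := hm
    exact lt_of_lt_of_le (hJ2 m) (hcmono.monotone (by omega : J m + 1 ≤ b + 1))
  have hX₁inj : ∀ m ∈ X₁, ∀ m' ∈ X₁, J m / 2 = J m' / 2 → m = m' := by
    rcases hX₁case with ⟨b, hb⟩ | hinj
    · exfalso
      have : X₁ ⊆ {m | J m ≤ 2*b+1} := by
        intro m hm
        have h2 : J m / 2 = b := by simpa using hb m hm
        simp only [Set.mem_setOf_eq]
        omega
      exact (mem_infinite hu.1 hX₁u) (Set.Finite.subset (hfinJ (2*b+1)) this)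
    · exact hinj
  have hX₂inj : ∀ m ∈ X₂, ∀ m' ∈ X₂, (J m + 1) / 2 = (J m' + 1) / 2 → m = m' := by
    rcases hX₂case with ⟨b, hb⟩ | hinj
    · exfalso
      have : X₂ ⊆ {m | J m ≤ 2*b+1} := by
        intro m hm
        have h2 : (J m + 1) / 2 = b := by simpa using hb m hm
        simp only [Set.mem_setOf_eq]
        omega
      exact (mem_infinite hu.1 hX₂u) (Set.Finite.subset (hfinJ (2*b+1)) this)
    · exact hinj
  refine ⟨U ∩ X₁ ∩ X₂, Filter.inter_mem (Filter.inter_mem hUu hX₁u) hX₂u, ?_⟩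
  rintro k ⟨⟨hkU, hkX₁⟩, hkX₂⟩ m ⟨⟨hmU, hmX₁⟩, hmX₂⟩ hkm
  -- show m ∈ B k
  have hjle : J k ≤ J m := by
    by_contra hc2
    push_neg at hc2
    have : c (J m + 1) ≤ c (J k) := hcmono.monotone (by omega : J m + 1 ≤ J k)
    have := lt_of_lt_of_le (hJ2 m) (le_trans this (hJ1 k))
    omega
  have hne1 : J m / 2 ≠ J k / 2 := by
    intro hq
    have heq : m = k := hX₁inj m hmX₁ k hkX₁ hq
    omega
  have hne2 : (J m + 1) / 2 ≠ (J k + 1) / 2 := by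
    intro hq
    have heq : m = k := hX₂inj m hmX₂ k hkX₂ hq
    omega
  have hjge : J k + 2 ≤ J m := by omega
  have hcm : c (J k + 2) ≤ m := le_trans (hcmono.monotone hjge) (hJ1 m)
  have hhm : c (J k + 1) < h m := hstar (J k + 1) m hmU hcm
  have hkh : k < h m := lt_of_lt_of_le (hJ2 k) (by omega)
  have : m ∈ B'' k := (hkey m k).2 hkh
  exact hB'sub k this.1

/-- Ramsey property for pairs with 2 colours. -/
lemma ramsey_pairs {u : Ultrafilter ℕ} (hu : IsRamsey u) (col : ℕ → ℕ → Bool) :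
    ∃ b : Bool, ∃ X ∈ u, ∀ n ∈ X, ∀ m ∈ X, n < m → col n m = b := by
  classical
  set i : ℕ → Bool := fun n => decide ({m | col n m = true} ∈ u) with hidef
  set A : ℕ → Set ℕ := fun n => {m | col n m = i n} with hAdef
  have hA : ∀ n, A n ∈ u := by
    intro n
    by_cases h : {m | col n m = true} ∈ u
    · have : i n = true := by simp [hidef, h]
      rw [hAdef]; simpa [this] using h
    · have h2 : i n = false := by simp [hidef, h]
      have h3 : {m | col n m = true}ᶜ ∈ u := Ultrafilter.compl_mem_iff_notMem.2 h
      rw [hAdef]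
      apply memsup h3
      intro m hm
      simp only [Set.mem_compl_iff, Set.mem_setOf_eq] at hm ⊢
      rw [h2]
      simpa using hm
  obtain ⟨W, hWu, b, hW⟩ : ∃ W ∈ u, ∃ b : Bool, ∀ n ∈ W, i n = b := by
    rcases Ultrafilter.mem_or_compl_mem u {n | i n = true} with h | h
    · exact ⟨_, h, true, fun n hn => hn⟩
    · refine ⟨_, h, false, fun n hn => ?_⟩
      simpa using hn
  obtain ⟨X₀, hX₀u, hX₀⟩ := diagonalize hu (fun k => ⋂ j ∈ Set.Iic k, A j)
    (fun k => by
      rw [← Ultrafilter.mem_coe]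
      rw [Filter.biInter_mem (Set.finite_Iic k)]
      exact fun j _ => hA j)
  refine ⟨b, X₀ ∩ W, Filter.inter_mem hX₀u hWu, ?_⟩
  rintro n ⟨hnX, hnW⟩ m ⟨hmX, hmW⟩ hnm
  have hmA : m ∈ A n := by
    have := hX₀ n hnX m hmX hnm
    simp only [Set.mem_iInter] at this
    exact this n (le_refl n)
  have : col n m = i n := hmA
  rw [this, hW n hnW]

/-- Strong discreteness: an injective (on a set in `u`) sequence of ultrafilters admits
pairwise disjoint witnesses on a set in `u`. -/
lemma discretize {u : Ultrafilter ℕ} (hu : IsRamsey u) (y : ℕ → bw) {X₀ : Set ℕ}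
    (hX₀ : X₀ ∈ u) (hinj : ∀ n ∈ X₀, ∀ m ∈ X₀, y n = y m → n = m) :
    ∃ X ∈ u, X ⊆ X₀ ∧ ∃ t : ℕ → Set ℕ, (∀ n ∈ X, t n ∈ y n) ∧
      ∀ n ∈ X, ∀ m ∈ X, n ≠ m → t n ∩ t m = ∅ := by
  classical
  set q : bw := u.bind y with hq
  have hBadfin : (X₀ ∩ {n | y n = q}).Finite := by
    apply Set.Subsingleton.finite
    intro a ⟨ha1, ha2⟩ b ⟨hb1, hb2⟩
    exact hinj a ha1 b hb1 (by rw [Set.mem_setOf_eq] at ha2 hb2; rw [ha2, hb2])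
  have hX₁u : X₀ \ {n | y n = q} ∈ u := by
    have hc : (X₀ ∩ {n | y n = q})ᶜ ∈ u := by
      rw [Ultrafilter.compl_mem_iff_notMem]
      exact hu.1 _ hBadfin
    apply memsup (Filter.inter_mem hX₀ hc)
    rintro n ⟨hn1, hn2⟩
    exact ⟨hn1, fun hn3 => hn2 ⟨hn1, hn3⟩⟩
  set X₁ := X₀ \ {n | y n = q} with hX₁def
  have hs : ∀ n : ℕ, ∃ s : Set ℕ, (n ∈ X₁ → s ∈ y n ∧ sᶜ ∈ q) := by
    intro n
    by_cases hn : n ∈ X₁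
    · obtain ⟨s, hs1, hs2⟩ := ne_ultra (show y n ≠ q from hn.2)
      exact ⟨s, fun _ => ⟨hs1, hs2⟩⟩
    · exact ⟨∅, fun h => absurd h hn⟩
  choose s hsspec using hs
  set A : ℕ → Set ℕ := fun n => if n ∈ X₁ then {k | (s n)ᶜ ∈ y k} else Set.univ with hAdef
  have hAmem : ∀ n, A n ∈ u := by
    intro n
    rw [hAdef]
    by_cases hn : n ∈ X₁
    · simp only [hn, if_true]
      exact (hsspec n hn).2
    · simp only [hn, if_false]
      exact Filter.univ_mem
  obtain ⟨X₂, hX₂u, hX₂⟩ := diagonalize hu (fun k => ⋂ j ∈ Set.Iic k, A j)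
    (fun k => by
      rw [← Ultrafilter.mem_coe]
      rw [Filter.biInter_mem (Set.finite_Iic k)]
      exact fun j _ => hAmem j)
  set X := X₁ ∩ X₂ with hXdef
  have hXu : X ∈ u := Filter.inter_mem hX₁u hX₂u
  have hcompl : ∀ n ∈ X, ∀ m ∈ X, n < m → (s n)ᶜ ∈ y m := by
    intro n hn m hm hnm
    have := hX₂ n hn.2 m hm.2 hnm
    simp only [Set.mem_iInter] at this
    have h2 := this n (le_refl n)
    rw [hAdef] at h2
    simp only [hn.1, if_true] at h2
    exact h2
  set t : ℕ → Set ℕ := fun m => s m \ ⋃ j ∈ X ∩ Set.Iio m, s j with htdef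
  refine ⟨X, hXu, fun n hn => hn.1.1, t, ?_, ?_⟩
  · intro m hm
    rw [htdef]
    simp only
    rw [Set.diff_eq]
    refine Filter.inter_mem (hsspec m hm.1).1 ?_
    rw [Set.compl_iUnion₂]
    rw [Filter.biInter_mem (Set.Finite.subset (Set.finite_Iio m) (fun j hj => hj.2))]
    intro j hj
    exact hcompl j hj.1 m hm (hj.2)
  · intro n hn m hm hnm
    rcases Nat.lt_or_ge n m with h | h
    · apply Set.eq_empty_of_subset_empty
      rintro x ⟨hx1, hx2⟩
      have : x ∈ ⋃ j ∈ X ∩ Set.Iio m, s j := Set.mem_biUnion ⟨hn, h⟩ hx1.1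
      exact hx2.2 this
    · have hmn : m < n := lt_of_le_of_ne h (Ne.symm hnm)
      apply Set.eq_empty_of_subset_empty
      rintro x ⟨hx1, hx2⟩
      have : x ∈ ⋃ j ∈ X ∩ Set.Iio n, s j := Set.mem_biUnion ⟨hm, hmn⟩ hx2.1
      exact hx1.2 this

lemma bind_limit {p : Ultrafilter ℕ} {g : ℕ → bw} {V : Set bw} (hV : IsOpen V)
    (h : p.bind g ∈ V) : {n | g n ∈ V} ∈ p := by
  obtain ⟨s, hs, hsub⟩ := exists_basic hV h
  exact memsup (mem_bind''.1 hs) (fun n hn => hsub hn)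

/-- Disjoint witnesses force distinct bind-limits. -/
lemma bind_ne {X E : Set ℕ} {w : ℕ → Set ℕ} {g h : ℕ → bw}
    (hwg : ∀ n ∈ X, w n ∈ g n) (hwh : ∀ n ∈ X, w n ∈ h n)
    (hd : ∀ n ∈ X, ∀ m ∈ X, n ≠ m → w n ∩ w m = ∅)
    {p q : Ultrafilter ℕ} (hXq : X ∈ q) (hEp : E ∈ p) (hEq : E ∉ q) (hEX : E ⊆ X) :
    p.bind g ≠ q.bind h := by
  intro heq
  set T : Set ℕ := ⋃ n ∈ E, w n with hT
  have hTp : T ∈ p.bind g := by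
    rw [mem_bind'']
    apply memsup hEp
    intro n hn
    exact memsup (hwg n (hEX hn)) (fun x hx => Set.mem_biUnion hn hx)
  rw [heq, mem_bind''] at hTp
  have hsub : {n | T ∈ h n} ∩ X ⊆ E := by
    rintro n ⟨hn1, hn2⟩
    by_contra hnE
    have hdisj : w n ∩ T = ∅ := by
      apply Set.eq_empty_of_subset_empty
      rintro x ⟨hx1, hx2⟩
      obtain ⟨k, hk, hxk⟩ := Set.mem_iUnion₂.1 hx2
      have : w n ∩ w k = ∅ := hd n hn2 k (hEX hk) (fun hc => hnE (hc ▸ hk))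
      have hmem : x ∈ w n ∩ w k := ⟨hx1, hxk⟩
      rw [this] at hmem
      exact hmem
    exact not_both_disjoint hdisj (hwh n hn2) hn1
  exact hEq (memsup (Filter.inter_mem hTp hXq) hsub)

lemma exists_nonbad {A : Set bw} (hA : Cardinal.mk A < Cardinal.continuum)
    (Bad1 Bad2 : Set (ℕ → Bool))
    (h1 : Cardinal.mk Bad1 ≤ Cardinal.mk (ℕ × A))
    (h2 : Cardinal.mk Bad2 ≤ Cardinal.mk A) :
    ∃ x, x ∉ Bad1 ∧ x ∉ Bad2 := by
  by_contra hc
  push_neg at hc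
  have hcov : Bad1 ∪ Bad2 = Set.univ := by
    ext x
    simp only [Set.mem_union, Set.mem_univ, iff_true]
    rcases Classical.em (x ∈ Bad1) with h | h
    · exact Or.inl h
    · exact Or.inr (hc x h)
  have hmk1 : Cardinal.mk Bad1 < Cardinal.continuum := by
    apply lt_of_le_of_lt h1
    rw [Cardinal.mk_prod, Cardinal.mk_nat]
    simp only [Cardinal.lift_id]
    exact Cardinal.mul_lt_of_lt Cardinal.aleph0_le_continuum Cardinal.aleph0_lt_continuum hA
  have hmk2 : Cardinal.mk Bad2 < Cardinal.continuum := lt_of_le_of_lt h2 hA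
  have huniv : Cardinal.mk (ℕ → Bool) = Cardinal.continuum := by
    rw [Cardinal.mk_arrow]
    simp [Cardinal.two_power_aleph0]
  have : Cardinal.mk (Set.univ : Set (ℕ → Bool)) ≤ Cardinal.mk Bad1 + Cardinal.mk Bad2 := by
    rw [← hcov]
    exact Cardinal.mk_union_le _ _
  rw [Cardinal.mk_univ, huniv] at this
  exact absurd (lt_of_le_of_lt this
    (Cardinal.add_lt_of_lt Cardinal.aleph0_le_continuum hmk1 hmk2)) (lt_irrefl _)

lemma wrap {A : Set bw} (f : ℕ → ℕ → ↥(Aᶜ)) (p : Ultrafilter ℕ) (hp : IsFree p)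
    (X : Set ℕ) (hX : X ∈ p) (xn : ℕ → bw) (x : bw)
    (hxn : ∀ n ∈ X, xn n ∉ A) (hx : x ∉ A)
    (c1 : ∀ n ∈ X, ∀ V : Set bw, IsOpen V → xn n ∈ V →
      {m | n < m ∧ (f n m : bw) ∈ V} ∈ p)
    (c2 : ∀ V : Set bw, IsOpen V → x ∈ V → {n | n ∈ X ∧ xn n ∈ V} ∈ p) :
    ∃ p : Ultrafilter ℕ, IsFree p ∧ ∃ B ∈ p, ∃ xn' : ℕ → ↥(Aᶜ), ∃ x' : ↥(Aᶜ),
      (∀ n ∈ B, ∀ U : Set ↥(Aᶜ), IsOpen U → xn' n ∈ U → {m : ℕ | n < m ∧ f n m ∈ U} ∈ p) ∧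
      (∀ U : Set ↥(Aᶜ), IsOpen U → x' ∈ U → {n : ℕ | n ∈ B ∧ xn' n ∈ U} ∈ p) := by
  classical
  refine ⟨p, hp, X, hX,
    (fun n => if h : n ∈ X then ⟨xn n, hxn n h⟩ else f 0 1), ⟨x, hx⟩, ?_, ?_⟩
  · intro n hn U hU hmem
    obtain ⟨V, hV, hVU⟩ := isOpen_induced_iff.1 hU
    have hxnV : xn n ∈ V := by
      have : (⟨xn n, hxn n hn⟩ : ↥(Aᶜ)) ∈ U := by
        simpa [hn] using hmem
      rw [← hVU] at this
      exact this
    apply memsup (c1 n hn V hV hxnV)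
    intro m hm
    refine ⟨hm.1, ?_⟩
    rw [← hVU]
    exact hm.2
  · intro U hU hmem
    obtain ⟨V, hV, hVU⟩ := isOpen_induced_iff.1 hU
    have hxV : x ∈ V := by
      rw [← hVU] at hmem
      exact hmem
    apply memsup (c2 V hV hxV)
    rintro n ⟨hn1, hn2⟩
    refine ⟨hn1, ?_⟩
    simp only [hn1, dif_pos]
    rw [← hVU]
    exact hn2

lemma biInter_mem_u {u : Ultrafilter ℕ} {k : ℕ} (C : ℕ → Set ℕ) (h : ∀ j, C j ∈ u) :
    (⋂ j ∈ Set.Iic k, C j) ∈ u := by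
  rw [← Ultrafilter.mem_coe, Filter.biInter_mem (Set.finite_Iic k)]
  exact fun j _ => h j

/-- The core combinatorial dichotomy for double sequences in `βω` along a Ramsey
ultrafilter. -/
lemma core {u : Ultrafilter ℕ} (hu : IsRamsey u) (F : ℕ → ℕ → bw) :
    ∃ X ∈ u,
      (∃ c : bw, ∀ n ∈ X, ∀ m ∈ X, n < m → F n m = c) ∨
      (∃ r : ℕ → bw, (∀ n ∈ X, ∀ m ∈ X, n < m → F n m = r n) ∧
        ∃ w : ℕ → Set ℕ, (∀ n ∈ X, w n ∈ r n) ∧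
          ∀ n ∈ X, ∀ m ∈ X, n ≠ m → w n ∩ w m = ∅) ∨
      (∃ z : ℕ → bw, (∀ n ∈ X, ∀ m ∈ X, n < m → F n m = z m) ∧
        ∃ w : ℕ → Set ℕ, (∀ m ∈ X, w m ∈ z m) ∧
          ∀ n ∈ X, ∀ m ∈ X, n ≠ m → w n ∩ w m = ∅) ∨
      (∃ s : ℕ → ℕ → Set ℕ, (∀ n ∈ X, ∀ m ∈ X, n < m → s n m ∈ F n m) ∧
        ∀ n ∈ X, ∀ m ∈ X, ∀ n' ∈ X, ∀ m' ∈ X, n < m → n' < m' → (n ≠ n' ∨ m ≠ m') →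
          s n m ∩ s n' m' = ∅) := by
  classical
  set Con : Set ℕ := {n | ∃ c, {m | F n m = c} ∈ u} with hConDef
  by_cases hCon : Con ∈ u
  -- Branch A : rows are u-constant
  · have hr : ∀ n, ∃ c : bw, n ∈ Con → {m | F n m = c} ∈ u := by
      intro n
      by_cases hn : n ∈ Con
      · obtain ⟨c, hc⟩ := hn
        exact ⟨c, fun _ => hc⟩
      · exact ⟨F 0 0, fun h => absurd h hn⟩
    choose r hrspec using hr
    set M : ℕ → Set ℕ := fun n => if n ∈ Con then {m | F n m = r n} else Set.univ with hMdef
    have hMmem : ∀ n, M n ∈ u := by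
      intro n
      rw [hMdef]
      by_cases hn : n ∈ Con
      · simp only [hn, if_true]
        exact hrspec n hn
      · simp only [hn, if_false]
        exact Filter.univ_mem
    obtain ⟨Xd, hXdu, hXd⟩ := diagonalize hu (fun k => ⋂ j ∈ Set.Iic k, M j)
      (fun k => biInter_mem_u M hMmem)
    have hMuse : ∀ n ∈ Xd, ∀ m ∈ Xd, n < m → n ∈ Con → F n m = r n := by
      intro n hn m hm hnm hnC
      have h2 := hXd n hn m hm hnm
      simp only [Set.mem_iInter] at h2
      have h3 := h2 n (le_refl n)
      rw [hMdef] at h3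
      simp only [hnC, if_true] at h3
      exact h3
    obtain ⟨V, hVu, hVcase⟩ := selective hu r
    rcases hVcase with ⟨c, hc⟩ | hinj
    · -- T1
      refine ⟨Xd ∩ Con ∩ V, Filter.inter_mem (Filter.inter_mem hXdu hCon) hVu,
        Or.inl ⟨c, ?_⟩⟩
      rintro n ⟨⟨hn1, hn2⟩, hn3⟩ m ⟨⟨hm1, _⟩, _⟩ hnm
      rw [hMuse n hn1 m hm1 hnm hn2]
      exact hc n hn3
    · -- T2
      have hinj' : ∀ n ∈ V ∩ Con, ∀ m ∈ V ∩ Con, r n = r m → n = m :=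
        fun n hn m hm h => hinj n hn.1 m hm.1 h
      obtain ⟨X₁, hX₁u, hX₁sub, w, hw1, hw2⟩ :=
        discretize hu r (Filter.inter_mem hVu hCon) hinj'
      refine ⟨Xd ∩ X₁, Filter.inter_mem hXdu hX₁u, Or.inr (Or.inl ⟨r, ?_, w, ?_, ?_⟩)⟩
      · rintro n ⟨hn1, hn2⟩ m ⟨hm1, _⟩ hnm
        exact hMuse n hn1 m hm1 hnm (hX₁sub hn2).2
      · rintro n ⟨_, hn2⟩
        exact hw1 n hn2
      · rintro n ⟨_, hn2⟩ m ⟨_, hm2⟩ hnm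
        exact hw2 n hn2 m hm2 hnm
  -- Branch B : rows are injective on a set in u
  · have hConc : Conᶜ ∈ u := Ultrafilter.compl_mem_iff_notMem.2 hCon
    have hrow : ∀ n, ∃ U, U ∈ u ∧ (n ∉ Con → ∀ m ∈ U, ∀ m' ∈ U, F n m = F n m' → m = m') := by
      intro n
      obtain ⟨U, hUu, hUc⟩ := selective hu (F n)
      refine ⟨U, hUu, fun hnC => ?_⟩
      rcases hUc with ⟨c, hc⟩ | hinj
      · exfalso
        exact hnC ⟨c, memsup hUu (fun m hm => hc m hm)⟩
      · exact hinj
    choose U hUmem hUinj using hrow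
    -- row-wise discretization
    have hrowdisc : ∀ n, ∃ Xr, Xr ∈ u ∧ ∃ t : ℕ → Set ℕ,
        (n ∉ Con → (Xr ⊆ U n ∧ (∀ m ∈ Xr, t m ∈ F n m) ∧
          ∀ m ∈ Xr, ∀ m' ∈ Xr, m ≠ m' → t m ∩ t m' = ∅)) := by
      intro n
      by_cases hn : n ∈ Con
      · exact ⟨Set.univ, Filter.univ_mem, fun _ => ∅, fun h => absurd hn (by simpa using h)⟩
      · obtain ⟨Xr, hXru, hXrsub, t, ht1, ht2⟩ :=
          discretize hu (F n) (hUmem n) (hUinj n hn)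
        exact ⟨Xr, hXru, t, fun _ => ⟨hXrsub, ht1, ht2⟩⟩
    choose Xr hXru tw htw using hrowdisc
    set q : ℕ → bw := fun n => u.bind (F n) with hqdef
    obtain ⟨Vq, hVqu, hVqcase⟩ := selective hu q
    rcases hVqcase with ⟨qc, hqc⟩ | hqinj
    · -- B2 : q constant ≡ qc on Vq
      obtain ⟨bcol, Xc, hXcu, hXc⟩ :=
        ramsey_pairs hu (fun n n' => decide ({m | F n m = F n' m} ∈ u))
      rcases (Bool.eq_false_or_eq_true bcol).symm with hbcol | hbcol
      · -- columns distinct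
        subst hbcol
        have colNe : ∀ n ∈ Xc, ∀ n' ∈ Xc, n < n' → {m | F n m = F n' m} ∉ u := by
          intro n hn n' hn' hlt
          have := hXc n hn n' hn' hlt
          simpa using this
        set Nne : ℕ → ℕ → Set ℕ := fun i j =>
          if {m | F i m ≠ F j m} ∈ u then {m | F i m ≠ F j m} else Set.univ with hNnedef
        have hNnemem : ∀ i j, Nne i j ∈ u := by
          intro i j
          rw [hNnedef]
          by_cases h : {m | F i m ≠ F j m} ∈ u
          · simpa [h] using h
          · simp only [h, if_false]; exact Filter.univ_mem
        have hNneuse : ∀ i ∈ Xc, ∀ j ∈ Xc, i < j → ∀ m ∈ Nne i j, F i m ≠ F j m := by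
          intro i hi j hj hij m hm
          have hcond : {m | F i m ≠ F j m} ∈ u := by
            have h2 : {m | F i m = F j m}ᶜ ∈ u :=
              Ultrafilter.compl_mem_iff_notMem.2 (colNe i hi j hj hij)
            apply memsup h2
            intro m hm2
            exact hm2
          rw [hNnedef] at hm
          simp only [hcond, if_true] at hm
          exact hm
        obtain ⟨bq, Xqc, hXqcu, hXqc⟩ := ramsey_pairs hu (fun n m => decide (F n m = qc))
        rcases (Bool.eq_false_or_eq_true bq).symm with hbq | hbq
        · -- F n m ≠ qc everywhere : elaborate T4
          subst hbq
          have hFne : ∀ n ∈ Xqc, ∀ m ∈ Xqc, n < m → F n m ≠ qc := by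
            intro n hn m hm hnm
            have := hXqc n hn m hm hnm
            simpa using this
          have hsexists : ∀ n m : ℕ, ∃ s : Set ℕ, (F n m ≠ qc → s ∈ F n m ∧ sᶜ ∈ qc) := by
            intro n m
            by_cases h : F n m = qc
            · exact ⟨∅, fun hc => absurd h hc⟩
            · obtain ⟨s, hs⟩ := ne_ultra h
              exact ⟨s, fun _ => hs⟩
          choose sep hsep using hsexists
          set A' : ℕ → ℕ → ℕ → Set ℕ := fun a b c' =>
            if {m' | (sep a b)ᶜ ∈ F c' m'} ∈ u then {m' | (sep a b)ᶜ ∈ F c' m'}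
            else Set.univ with hA'def
          have hA'mem : ∀ a b c', A' a b c' ∈ u := by
            intro a b c'
            rw [hA'def]
            by_cases h : {m' | (sep a b)ᶜ ∈ F c' m'} ∈ u
            · simpa [h] using h
            · simp only [h, if_false]; exact Filter.univ_mem
          have hA'use : ∀ a b c', c' ∈ Vq → F a b ≠ qc →
              ∀ m' ∈ A' a b c', (sep a b)ᶜ ∈ F c' m' := by
            intro a b c' hc' hab m' hm'
            have h1 : (sep a b)ᶜ ∈ qc := (hsep a b hab).2
            have h2 : (sep a b)ᶜ ∈ q c' := by rw [hqc c' hc']; exact h1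
            have hcond : {m' | (sep a b)ᶜ ∈ F c' m'} ∈ u := by
              rw [hqdef] at h2
              exact mem_bind''.1 h2
            rw [hA'def] at hm'
            simp only [hcond, if_true] at hm'
            exact hm'
          obtain ⟨Xd, hXdu, hXd⟩ := diagonalize hu
            (fun k => (⋂ j ∈ Set.Iic k, Xr j) ∩
              ((⋂ a ∈ Set.Iic k, ⋂ b ∈ Set.Iic k, ⋂ c' ∈ Set.Iic k, A' a b c') ∩
                (⋂ i ∈ Set.Iic k, ⋂ j ∈ Set.Iic k, Nne i j)))
            (fun k => by
              refine Filter.inter_mem (biInter_mem_u _ hXru) (Filter.inter_mem ?_ ?_)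
              · exact biInter_mem_u _ (fun a => biInter_mem_u _ (fun b =>
                  biInter_mem_u _ (fun c' => hA'mem a b c')))
              · exact biInter_mem_u _ (fun i => biInter_mem_u _ (fun j => hNnemem i j)))
          have hXd' : ∀ k ∈ Xd, ∀ m ∈ Xd, k < m →
              (∀ j ≤ k, m ∈ Xr j) ∧ (∀ a ≤ k, ∀ b ≤ k, ∀ c' ≤ k, m ∈ A' a b c') ∧
                (∀ i ≤ k, ∀ j ≤ k, m ∈ Nne i j) := by
            intro k hk m hm hkm
            have h2 := hXd k hk m hm hkm
            simp only [Set.mem_inter_iff, Set.mem_iInter] at h2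
            exact ⟨fun j hj => h2.1 j hj, fun a ha b hb c' hc' => h2.2.1 a ha b hb c' hc',
              fun i hi j hj => h2.2.2 i hi j hj⟩
          set X : Set ℕ := Xd ∩ Xqc ∩ Xc ∩ Vq ∩ Conᶜ with hXdef
          have hXu : X ∈ u := Filter.inter_mem (Filter.inter_mem (Filter.inter_mem
            (Filter.inter_mem hXdu hXqcu) hXcu) hVqu) hConc
          have hXXd : X ⊆ Xd := fun x hx => hx.1.1.1.1
          have hXXqc : X ⊆ Xqc := fun x hx => hx.1.1.1.2
          have hXXc : X ⊆ Xc := fun x hx => hx.1.1.2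
          have hXVq : X ⊆ Vq := fun x hx => hx.1.2
          have hXConc : X ⊆ Conᶜ := fun x hx => hx.2
          have hcoldist : ∀ m ∈ X, ∀ i ∈ X, ∀ j ∈ X, i < m → j < m → i ≠ j →
              F i m ≠ F j m := by
            have key : ∀ m ∈ X, ∀ i ∈ X, ∀ j ∈ X, i < j → j < m → F i m ≠ F j m := by
              intro m hm i hi j hj hij hjm
              have h2 := (hXd' j (hXXd hj) m (hXXd hm) hjm).2.2 i (le_of_lt hij) j (le_refl j)
              exact hNneuse i (hXXc hi) j (hXXc hj) hij m h2
            intro m hm i hi j hj him hjm hij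
            rcases Nat.lt_or_ge i j with h | h
            · exact key m hm i hi j hj h hjm
            · have hji : j < i := lt_of_le_of_ne h (Ne.symm hij)
              exact fun hc => (key m hm j hj i hi hji him) hc.symm
          have hvex : ∀ m, ∃ v : ℕ → Set ℕ, m ∈ X →
              ((∀ i ∈ X, i < m → v i ∈ F i m) ∧
                (∀ i ∈ X, ∀ j ∈ X, i < m → j < m → i ≠ j → v i ∩ v j = ∅)) := by
            intro m
            by_cases hm : m ∈ X
            · obtain ⟨v, hv1, hv2⟩ := finite_disjointify (fun i => F i m) m X
                (fun i hi j hj him hjm hij => hcoldist m hm i hi j hj him hjm hij)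
              exact ⟨v, fun _ => ⟨fun i hi him => hv1 i hi him,
                fun i hi j hj him hjm hij => hv2 i hi j hj him hjm hij⟩⟩
            · exact ⟨fun _ => ∅, fun h => absurd h hm⟩
          choose v hvspec using hvex
          set Um : ℕ → Set ℕ := fun m => ⋃ b ∈ X ∩ Set.Iio m, ⋃ a ∈ X ∩ Set.Iio b, sep a b
            with hUmdef
          have hsepmem : ∀ n ∈ X, ∀ m ∈ X, n < m → sep n m ∈ F n m :=
            fun n hn m hm hnm => (hsep n m (hFne n (hXXqc hn) m (hXXqc hm) hnm)).1
          have hUmcompl : ∀ n ∈ X, ∀ m ∈ X, n < m → (Um m)ᶜ ∈ F n m := by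
            intro n hn m hm hnm
            rw [hUmdef]
            simp only
            rw [← Ultrafilter.mem_coe]
            rw [Set.compl_iUnion₂]
            rw [Filter.biInter_mem (Set.Finite.subset (Set.finite_Iio m) (fun b hb => hb.2))]
            rintro b ⟨hbX, hbm⟩
            rw [Set.compl_iUnion₂]
            rw [Filter.biInter_mem (Set.Finite.subset (Set.finite_Iio b) (fun a ha => ha.2))]
            rintro a ⟨haX, hab⟩
            -- (sep a b)ᶜ ∈ F n m, with a < b < m, n < m, all in X
            have habne : F a b ≠ qc := hFne a (hXXqc haX) b (hXXqc hbX) hab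
            rcases le_total b n with hbn | hnb
            · have h2 := (hXd' n (hXXd hn) m (hXXd hm) hnm).2.1 a
                (le_trans (le_of_lt hab) hbn) b hbn n (le_refl n)
              exact hA'use a b n (hXVq hn) habne m h2
            · have h2 := (hXd' b (hXXd hbX) m (hXXd hm) hbm).2.1 a
                (le_of_lt hab) b (le_refl b) n hnb
              exact hA'use a b n (hXVq hn) habne m h2
          refine ⟨X, hXu, Or.inr (Or.inr (Or.inr
            ⟨fun n m => ((sep n m ∩ tw n m) ∩ v m n) \ Um m, ?_, ?_⟩))⟩
          · intro n hn m hm hnm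
            show (((sep n m ∩ tw n m) ∩ v m n) \ Um m) ∈ F n m
            rw [Set.diff_eq]
            refine Filter.inter_mem (Filter.inter_mem (Filter.inter_mem ?_ ?_) ?_) ?_
            · exact hsepmem n hn m hm hnm
            · have hmXr : m ∈ Xr n := (hXd' n (hXXd hn) m (hXXd hm) hnm).1 n (le_refl n)
              exact (htw n (hXConc hn)).2.1 m hmXr
            · exact (hvspec m hm).1 n hn hnm
            · exact hUmcompl n hn m hm hnm
          · intro n hn m hm n' hn' m' hm' hnm hn'm' hne
            rcases Nat.lt_trichotomy m m' with hmm | hmm | hmm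
            · -- m < m' : sep n m ⊆ Um m'
              apply Set.eq_empty_of_subset_empty
              rintro x ⟨⟨⟨⟨hx1, _⟩, _⟩, _⟩, ⟨_, hx2⟩⟩
              apply hx2
              rw [hUmdef]
              refine Set.mem_biUnion ⟨hm, hmm⟩ ?_
              exact Set.mem_biUnion ⟨hn, hnm⟩ hx1
            · -- m = m' : use column disjointness
              subst hmm
              have hnn' : n ≠ n' := by
                rcases hne with h | h
                · exact h
                · exact absurd rfl h
              have hd := (hvspec m hm).2 n hn n' hn' hnm hn'm' hnn'
              apply Set.eq_empty_of_subset_empty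
              rintro x ⟨⟨⟨_, hx1⟩, _⟩, ⟨⟨_, hx2⟩, _⟩⟩
              have : x ∈ v m n ∩ v m n' := ⟨hx1, hx2⟩
              rw [hd] at this
              exact this
            · -- m' < m : sep n' m' ⊆ Um m
              apply Set.eq_empty_of_subset_empty
              rintro x ⟨⟨_, hx2⟩, ⟨⟨⟨hx1, _⟩, _⟩, _⟩⟩
              apply hx2
              rw [hUmdef]
              refine Set.mem_biUnion ⟨hm', hmm⟩ ?_
              exact Set.mem_biUnion ⟨hn', hn'm'⟩ hx1
        · -- F n m = qc on pairs : T1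
          subst hbq
          refine ⟨Xqc, hXqcu, Or.inl ⟨qc, ?_⟩⟩
          intro n hn m hm hnm
          have := hXqc n hn m hm hnm
          simpa using this
      · -- columns equal : T3
        subst hbcol
        set N' : ℕ → ℕ → Set ℕ := fun i j =>
          if {m | F i m = F j m} ∈ u then {m | F i m = F j m} else Set.univ with hN'def
        have hN'mem : ∀ i j, N' i j ∈ u := by
          intro i j
          rw [hN'def]
          by_cases h : {m | F i m = F j m} ∈ u
          · simpa [h] using h
          · simp only [h, if_false]; exact Filter.univ_mem
        have hN'use : ∀ i ∈ Xc, ∀ j ∈ Xc, i < j → ∀ m ∈ N' i j, F i m = F j m := by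
          intro i hi j hj hij m hm
          have hcond : {m | F i m = F j m} ∈ u := by
            have := hXc i hi j hj hij
            simpa using this
          rw [hN'def] at hm
          simp only [hcond, if_true] at hm
          exact hm
        obtain ⟨Xd, hXdu, hXd⟩ := diagonalize hu
          (fun k => (⋂ j ∈ Set.Iic k, Xr j) ∩ (⋂ i ∈ Set.Iic k, ⋂ j ∈ Set.Iic k, N' i j))
          (fun k => Filter.inter_mem (biInter_mem_u _ hXru)
            (biInter_mem_u _ (fun i => biInter_mem_u _ (fun j => hN'mem i j))))
        have hXd' : ∀ k ∈ Xd, ∀ m ∈ Xd, k < m →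
            (∀ j ≤ k, m ∈ Xr j) ∧ (∀ i ≤ k, ∀ j ≤ k, m ∈ N' i j) := by
          intro k hk m hm hkm
          have h2 := hXd k hk m hm hkm
          simp only [Set.mem_inter_iff, Set.mem_iInter] at h2
          exact ⟨fun j hj => h2.1 j hj, fun i hi j hj => h2.2 i hi j hj⟩
        set X' : Set ℕ := Xd ∩ Xc ∩ Conᶜ with hX'def
        have hX'u : X' ∈ u := Filter.inter_mem (Filter.inter_mem hXdu hXcu) hConc
        have hX'ne : X'.Nonempty := (mem_infinite hu.1 hX'u).nonempty
        set n0 : ℕ := sInf X' with hn0def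
        have hn0X : n0 ∈ X' := Nat.sInf_mem hX'ne
        set z : ℕ → bw := fun m => F n0 m with hzdef
        have hz : ∀ n ∈ X', ∀ m ∈ X', n < m → F n m = z m := by
          intro n hn m hm hnm
          rcases Classical.em (n = n0) with h0 | h0
          · subst h0; rfl
          · have hlt : n0 < n := lt_of_le_of_ne (Nat.sInf_le hn) (Ne.symm h0)
            have h2 := (hXd' n hn.1.1 m hm.1.1 hnm).2 n0 (le_of_lt hlt) n (le_refl n)
            exact (hN'use n0 hn0X.1.2 n hn.1.2 hlt m h2).symm
        have hIoi : Set.Ioi n0 ∈ u := by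
          apply free_cofinite hu.1
          rw [Set.compl_Ioi]
          exact Set.finite_Iic n0
        have hX''u : X' ∩ Set.Ioi n0 ∈ u := Filter.inter_mem hX'u hIoi
        have hzinj : ∀ m ∈ X' ∩ Set.Ioi n0, ∀ m' ∈ X' ∩ Set.Ioi n0, z m = z m' → m = m' := by
          intro m hm m' hm' hzz
          have hmXr : m ∈ Xr n0 := (hXd' n0 hn0X.1.1 m hm.1.1.1 hm.2).1 n0 (le_refl n0)
          have hm'Xr : m' ∈ Xr n0 := (hXd' n0 hn0X.1.1 m' hm'.1.1.1 hm'.2).1 n0 (le_refl n0)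
          have hn0C : n0 ∉ Con := hn0X.2
          exact hUinj n0 hn0C m ((htw n0 hn0C).1 hmXr) m' ((htw n0 hn0C).1 hm'Xr) hzz
        obtain ⟨X₃, hX₃u, hX₃sub, w, hw1, hw2⟩ := discretize hu z hX''u hzinj
        refine ⟨X₃, hX₃u, Or.inr (Or.inr (Or.inl ⟨z, ?_, w, hw1, hw2⟩))⟩
        intro n hn m hm hnm
        exact hz n (hX₃sub hn).1 m (hX₃sub hm).1 hnm
    · -- B1 : q injective on Vq → T4
      obtain ⟨Xq, hXqu, hXqsub, w, hw1, hw2⟩ := discretize hu q hVqu hqinj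
      set W : ℕ → Set ℕ := fun n =>
        if {m | w n ∈ F n m} ∈ u then {m | w n ∈ F n m} else Set.univ with hWdef
      have hWmem : ∀ n, W n ∈ u := by
        intro n
        rw [hWdef]
        by_cases h : {m | w n ∈ F n m} ∈ u
        · simpa [h] using h
        · simp only [h, if_false]
          exact Filter.univ_mem
      have hWuse : ∀ n ∈ Xq, ∀ m, m ∈ W n → w n ∈ F n m := by
        intro n hn m hm
        have hcond : {m | w n ∈ F n m} ∈ u := hw1 n hn
        rw [hWdef] at hm
        simp only [hcond, if_true] at hm
        exact hm
      obtain ⟨Xd, hXdu, hXd⟩ := diagonalize hu (fun k => ⋂ j ∈ Set.Iic k, (Xr j ∩ W j))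
        (fun k => biInter_mem_u _ (fun j => Filter.inter_mem (hXru j) (hWmem j)))
      have hdiag : ∀ n ∈ Xd, ∀ m ∈ Xd, n < m → m ∈ Xr n ∧ m ∈ W n := by
        intro n hn m hm hnm
        have h2 := hXd n hn m hm hnm
        simp only [Set.mem_iInter] at h2
        exact h2 n (le_refl n)
      refine ⟨Xd ∩ Xq ∩ Conᶜ, Filter.inter_mem (Filter.inter_mem hXdu hXqu) hConc,
        Or.inr (Or.inr (Or.inr ⟨fun n m => tw n m ∩ w n, ?_, ?_⟩))⟩
      · rintro n ⟨⟨hn1, hn2⟩, hn3⟩ m ⟨⟨hm1, _⟩, _⟩ hnm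
        obtain ⟨hmXr, hmW⟩ := hdiag n hn1 m hm1 hnm
        refine Filter.inter_mem ?_ (hWuse n hn2 m hmW)
        exact (htw n hn3).2.1 m hmXr
      · rintro n ⟨⟨hn1, hn2⟩, hn3⟩ m ⟨⟨hm1, _⟩, _⟩ n' ⟨⟨hn'1, hn'2⟩, hn'3⟩
          m' ⟨⟨hm'1, _⟩, _⟩ hnm hn'm' hne
        rcases Classical.em (n = n') with hnn | hnn
        · subst hnn
          have hmm : m ≠ m' := by
            rcases hne with h | h
            · exact absurd rfl h
            · exact h
          have hXrm : m ∈ Xr n := (hdiag n hn1 m hm1 hnm).1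
          have hXrm' : m' ∈ Xr n := (hdiag n hn1 m' hm'1 hn'm').1
          have hd : tw n m ∩ tw n m' = ∅ := (htw n hn3).2.2 m hXrm m' hXrm' hmm
          apply Set.eq_empty_of_subset_empty
          rintro x ⟨⟨hx1, _⟩, ⟨hx2, _⟩⟩
          have : x ∈ tw n m ∩ tw n m' := ⟨hx1, hx2⟩
          rw [hd] at this
          exact this
        · have hd : w n ∩ w n' = ∅ := hw2 n hn2 n' hn'2 hnn
          apply Set.eq_empty_of_subset_empty
          rintro x ⟨⟨_, hx1⟩, ⟨_, hx2⟩⟩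
          have : x ∈ w n ∩ w n' := ⟨hx1, hx2⟩
          rw [hd] at this
          exact this

lemma inter_Ioi_mem {p : Ultrafilter ℕ} (hp : IsFree p) {X : Set ℕ} (hX : X ∈ p) (n : ℕ) :
    X ∩ Set.Ioi n ∈ p :=
  Filter.inter_mem hX (free_cofinite hp (by rw [Set.compl_Ioi]; exact Set.finite_Iic n))

/-- If there is a Ramsey ultrafilter, then `βω \ A` is doubly countably compact for
every `A` of size `< 𝔠`. -/
theorem compl_small_doubly_countably_compact_of_ramsey
    (hr : ∃ u : Ultrafilter ℕ, IsRamsey u) (A : Set (Ultrafilter ℕ))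
    (hA : Cardinal.mk A < Cardinal.continuum) :
    DoublyCountablyCompact ↥(Aᶜ) := by
  classical
  obtain ⟨u, hu⟩ := hr
  intro f
  set F : ℕ → ℕ → bw := fun n m => (f n m : bw) with hFdef
  have hF : ∀ n m, F n m ∉ A := fun n m => (f n m).2
  obtain ⟨X, hXu, hcase⟩ := core hu F
  have hXinf : X.Infinite := mem_infinite hu.1 hXu
  obtain ⟨P, hP, hPd⟩ := exists_family hXinf
  have hXIoi : ∀ n : ℕ, (X ∩ Set.Ioi n).Nonempty := by
    intro n
    have h1 : (X \ Set.Iic n).Infinite := hXinf.diff (Set.finite_Iic n)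
    have h2 : X \ Set.Iic n ⊆ X ∩ Set.Ioi n := by
      rintro a ⟨ha1, ha2⟩
      exact ⟨ha1, by simpa using ha2⟩
    exact (h1.mono h2).nonempty
  rcases hcase with ⟨c, hc⟩ | ⟨r, hr2, w, hw1, hw2⟩ | ⟨z, hz2, w, hw1, hw2⟩ | ⟨s, hs1, hs2⟩
  · -- T1 : constant
    have hcA : c ∉ A := by
      obtain ⟨n, hn⟩ := hXinf.nonempty
      obtain ⟨m, hm⟩ := hXIoi n
      rw [← hc n hn m hm.1 hm.2]
      exact hF n m
    obtain ⟨p, hpfree, hpX⟩ := exists_free_contains hXinf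
    refine wrap f p hpfree X hpX (fun _ => c) c (fun n _ => hcA) hcA ?_ ?_
    · intro n hn V hV hcV
      apply memsup (inter_Ioi_mem hpfree hpX n)
      rintro m ⟨hm1, hm2⟩
      exact ⟨hm2, by rw [show (f n m : bw) = F n m from rfl, hc n hn m hm1 hm2]; exact hcV⟩
    · intro V hV hcV
      apply memsup hpX
      intro n hn
      exact ⟨hn, hcV⟩
  · -- T2 : min-dependent
    have hrA : ∀ n ∈ X, r n ∉ A := by
      intro n hn
      obtain ⟨m, hm⟩ := hXIoi n
      rw [← hr2 n hn m hm.1 hm.2]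
      exact hF n m
    set Bad2 : Set (ℕ → Bool) := {x | (P x).bind r ∈ A} with hBad2
    have hBad2inj : Cardinal.mk Bad2 ≤ Cardinal.mk A := by
      apply Cardinal.mk_le_of_injective
        (f := fun x : Bad2 => (⟨(P x.1).bind r, x.2⟩ : A))
      intro x x' hxx
      ext1
      by_contra hne
      obtain ⟨E, hEX, hEx, hEx'⟩ := hPd x.1 x'.1 hne
      exact bind_ne hw1 hw1 hw2 (hP x'.1).2 hEx hEx' hEX (congrArg Subtype.val hxx)
    obtain ⟨x, _, hx2⟩ := exists_nonbad hA ∅ Bad2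
      (by rw [Cardinal.mk_emptyCollection]; exact zero_le) hBad2inj
    set p := P x with hpdef
    refine wrap f p (hP x).1 X (hP x).2 r ((p).bind r) hrA hx2 ?_ ?_
    · intro n hn V hV hrV
      apply memsup (inter_Ioi_mem (hP x).1 (hP x).2 n)
      rintro m ⟨hm1, hm2⟩
      exact ⟨hm2, by rw [show (f n m : bw) = F n m from rfl, hr2 n hn m hm1 hm2]; exact hrV⟩
    · intro V hV hbV
      have h1 : {n | r n ∈ V} ∈ p := bind_limit hV hbV
      apply memsup (Filter.inter_mem (hP x).2 h1)
      rintro n ⟨hn1, hn2⟩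
      exact ⟨hn1, hn2⟩
  · -- T3 : max-dependent
    set Bad2 : Set (ℕ → Bool) := {x | (P x).bind z ∈ A} with hBad2
    have hBad2inj : Cardinal.mk Bad2 ≤ Cardinal.mk A := by
      apply Cardinal.mk_le_of_injective
        (f := fun x : Bad2 => (⟨(P x.1).bind z, x.2⟩ : A))
      intro x x' hxx
      ext1
      by_contra hne
      obtain ⟨E, hEX, hEx, hEx'⟩ := hPd x.1 x'.1 hne
      exact bind_ne hw1 hw1 hw2 (hP x'.1).2 hEx hEx' hEX (congrArg Subtype.val hxx)
    obtain ⟨x, _, hx2⟩ := exists_nonbad hA ∅ Bad2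
      (by rw [Cardinal.mk_emptyCollection]; exact zero_le) hBad2inj
    set p := P x with hpdef
    set cp : bw := (P x).bind z with hcpdef
    refine wrap f p (hP x).1 X (hP x).2 (fun _ => cp) cp (fun _ _ => hx2) hx2 ?_ ?_
    · intro n hn V hV hcV
      have h1 : {m | z m ∈ V} ∈ p := bind_limit hV hcV
      apply memsup (Filter.inter_mem h1 (inter_Ioi_mem (hP x).1 (hP x).2 n))
      rintro m ⟨hm1, hm2, hm3⟩
      exact ⟨hm3, by rw [show (f n m : bw) = F n m from rfl, hz2 n hn m hm2 hm3]; exact hm1⟩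
    · intro V hV hcV
      apply memsup (hP x).2
      intro n hn
      exact ⟨hn, hcV⟩
  · -- T4 : fully discrete
    set T : ℕ → Set ℕ := fun n => ⋃ m ∈ X ∩ Set.Ioi n, s n m with hTdef
    have hTmem : ∀ n ∈ X, ∀ y : Ultrafilter ℕ, X ∈ y → IsFree y → T n ∈ y.bind (F n) := by
      intro n hn y hXy hyfree
      rw [mem_bind'']
      apply memsup (inter_Ioi_mem hyfree hXy n)
      rintro m ⟨hm1, hm2⟩
      apply memsup (hs1 n hn m hm1 hm2)
      intro a ha
      exact Set.mem_biUnion ⟨hm1, hm2⟩ ha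
    have hTdisj : ∀ n ∈ X, ∀ n' ∈ X, n ≠ n' → T n ∩ T n' = ∅ := by
      intro n hn n' hn' hne
      apply Set.eq_empty_of_subset_empty
      rintro a ⟨ha1, ha2⟩
      obtain ⟨m, hm, ham⟩ := Set.mem_iUnion₂.1 ha1
      obtain ⟨m', hm', ham'⟩ := Set.mem_iUnion₂.1 ha2
      have hd := hs2 n hn m hm.1 n' hn' m' hm'.1 hm.2 hm'.2 (Or.inl hne)
      have : a ∈ s n m ∩ s n' m' := ⟨ham, ham'⟩
      rw [hd] at this
      exact this
    set Bad1 : Set (ℕ → Bool) := {x | ∃ n ∈ X, (P x).bind (F n) ∈ A} with hBad1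
    set Bad2 : Set (ℕ → Bool) := {x | (P x).bind (fun n => (P x).bind (F n)) ∈ A} with hBad2
    have hBad1inj : Cardinal.mk Bad1 ≤ Cardinal.mk (ℕ × A) := by
      apply Cardinal.mk_le_of_injective (f := fun x : Bad1 =>
        ((x.2.choose, ⟨(P x.1).bind (F x.2.choose), x.2.choose_spec.2⟩) : ℕ × A))
      intro x x' hxx
      have hn1 : x.2.choose = x'.2.choose := congrArg Prod.fst hxx
      have hv : (P x.1).bind (F x.2.choose) = (P x'.1).bind (F x'.2.choose) :=
        congrArg (fun y : ℕ × A => (y.2 : bw)) hxx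
      set n := x.2.choose with hndef
      have hnX : n ∈ X := x.2.choose_spec.1
      ext1
      by_contra hne
      obtain ⟨E, hEX, hEx, hEx'⟩ := hPd x.1 x'.1 hne
      have hE'x : E ∩ Set.Ioi n ∈ P x.1 := inter_Ioi_mem (hP x.1).1 hEx n
      have hE'x' : E ∩ Set.Ioi n ∉ P x'.1 := by
        intro hc
        exact hEx' (memsup hc (fun a ha => ha.1))
      have hXI : X ∩ Set.Ioi n ∈ P x'.1 := inter_Ioi_mem (hP x'.1).1 (hP x'.1).2 n
      refine bind_ne (X := X ∩ Set.Ioi n) (E := E ∩ Set.Ioi n) (w := s n)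
        (g := F n) (h := F n) ?_ ?_ ?_ hXI hE'x hE'x'
        (fun a ha => ⟨hEX ha.1, ha.2⟩) ?_
      · rintro m ⟨hm1, hm2⟩
        exact hs1 n hnX m hm1 hm2
      · rintro m ⟨hm1, hm2⟩
        exact hs1 n hnX m hm1 hm2
      · rintro m ⟨hm1, hm2⟩ m' ⟨hm'1, hm'2⟩ hmm
        exact hs2 n hnX m hm1 n hnX m' hm'1 hm2 hm'2 (Or.inr hmm)
      · rw [← hn1] at hv
        exact hv
    have hBad2inj : Cardinal.mk Bad2 ≤ Cardinal.mk A := by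
      apply Cardinal.mk_le_of_injective (f := fun x : Bad2 =>
        (⟨(P x.1).bind (fun n => (P x.1).bind (F n)), x.2⟩ : A))
      intro x x' hxx
      ext1
      by_contra hne
      obtain ⟨E, hEX, hEx, hEx'⟩ := hPd x.1 x'.1 hne
      refine bind_ne (X := X) (E := E) (w := T)
        (g := fun n => (P x.1).bind (F n)) (h := fun n => (P x'.1).bind (F n))
        ?_ ?_ hTdisj (hP x'.1).2 hEx hEx' hEX (congrArg Subtype.val hxx)
      · intro n hn
        exact hTmem n hn (P x.1) (hP x.1).2 (hP x.1).1
      · intro n hn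
        exact hTmem n hn (P x'.1) (hP x'.1).2 (hP x'.1).1
    obtain ⟨x, hx1, hx2⟩ := exists_nonbad hA Bad1 Bad2 hBad1inj hBad2inj
    set p := P x with hpdef
    have hxnA : ∀ n ∈ X, p.bind (F n) ∉ A := by
      intro n hn hc
      exact hx1 ⟨n, hn, hc⟩
    refine wrap f p (hP x).1 X (hP x).2 (fun n => p.bind (F n))
      (p.bind (fun n => p.bind (F n))) hxnA hx2 ?_ ?_
    · intro n hn V hV hbV
      have h1 : {m | F n m ∈ V} ∈ p := bind_limit hV hbV
      apply memsup (Filter.inter_mem h1 (inter_Ioi_mem (hP x).1 (hP x).2 n))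
      rintro m ⟨hm1, ⟨hm2, hm3⟩⟩
      exact ⟨hm3, hm1⟩
    · intro V hV hbV
      have h1 : {n | p.bind (F n) ∈ V} ∈ p := bind_limit hV hbV
      apply memsup (Filter.inter_mem (hP x).2 h1)
      rintro n ⟨hn1, hn2⟩
      exact ⟨hn1, hn2⟩
end

section
/- Assume the set of Ramsey ultrafilters on ℕ has cardinality 2^𝔠. Then for every A ⊆ βω with |A| < 2^𝔠, the space βω ∖ A, with the subspace topology, is doubly countably compact. -/
lemma mem_bind_iff {p : Ultrafilter ℕ} {y : ℕ → Ultrafilter ℕ} {s : Set ℕ} :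
    s ∈ p.bind y ↔ {n | s ∈ y n} ∈ p := Iff.rfl

lemma free_compl_mem {p : Ultrafilter ℕ} (hp : IsFree p) {A : Set ℕ} (hA : A.Finite) :
    Aᶜ ∈ p := Ultrafilter.compl_mem_iff_notMem.2 (hp A hA)

lemma free_Ioi_mem {p : Ultrafilter ℕ} (hp : IsFree p) (n : ℕ) : Set.Ioi n ∈ p := by
  have := free_compl_mem hp (Set.finite_Iic n)
  rwa [Set.compl_Iic] at this

lemma ramsey_selector {p : Ultrafilter ℕ} (hp : IsRamsey p) (g : ℕ → ℕ)
    (hg : ∀ n, {m | g m = n} ∉ p) : ∃ U ∈ p, ∀ n, (U ∩ {m | g m = n}).Subsingleton := by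
  rcases hp.2 (fun n => {m | g m = n})
      (fun i j hij => Set.disjoint_left.2 (fun m hmi hmj => hij (hmi.symm.trans hmj)))
      (Set.eq_univ_of_forall fun m => Set.mem_iUnion.2 ⟨g m, rfl⟩) with h | h
  · exact absurd h.choose_spec (hg _)
  · exact h

set_option maxHeartbeats 2000000 in
lemma ramsey_diagonal {p : Ultrafilter ℕ} (hp : IsRamsey p) (A : ℕ → Set ℕ)
    (hA : ∀ n, A n ∈ p) : ∃ W ∈ p, ∀ n ∈ W, ∀ m ∈ W, n < m → m ∈ A n := by
  classical
  -- decreasing refinement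
  set A' : ℕ → Set ℕ := fun n => Set.Ioi n ∩ ⋂ k ∈ Set.Iic n, A k with hA'def
  have hA'mem : ∀ n, A' n ∈ p := fun n =>
    Filter.inter_mem (free_Ioi_mem hp.1 n)
      ((Filter.biInter_mem (Set.finite_Iic n)).2 fun k _ => hA k)
  have hA'self : ∀ m, m ∉ A' m := fun m hm => lt_irrefl m hm.1
  have hA'sub : ∀ {n m}, m ∈ A' n → m ∈ A n := by
    intro n m hm
    exact Set.mem_iInter₂.1 hm.2 n (le_refl n)
  have hA'anti : ∀ {n n' m}, n ≤ n' → m ∈ A' n' → m ∈ A' n := by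
    intro n n' m h hm
    exact ⟨lt_of_le_of_lt h hm.1, Set.mem_iInter₂.2 fun k hk =>
      Set.mem_iInter₂.1 hm.2 k (le_trans hk h)⟩
  -- g m = least n with m ∉ A' n
  have hex : ∀ m, ∃ n, m ∉ A' n := fun m => ⟨m, hA'self m⟩
  set g : ℕ → ℕ := fun m => Nat.find (hex m) with hgdef
  have hglt : ∀ {n m}, n < g m → m ∈ A' n := fun {n m} h => by
    by_contra hc; exact absurd (Nat.find_le hc) (not_le.2 h)
  have hgself : ∀ m, m ∉ A' (g m) := fun m => Nat.find_spec (hex m)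
  -- selector
  obtain ⟨U, hUp, hUsel⟩ : ∃ U ∈ p, ∀ n, (U ∩ {m | g m = n}).Subsingleton := by
    refine ramsey_selector hp g (fun n hn => ?_)
    have : {m | g m = n} ⊆ (A' n)ᶜ := fun m hm => by
      rw [Set.mem_setOf_eq] at hm; rw [← hm]; exact hgself m
    have h1 : (A' n)ᶜ ∈ p := Filter.mem_of_superset hn this
    exact (Ultrafilter.compl_mem_iff_notMem.1 h1) (hA'mem n)
  -- sublevel sets of g on U are finite
  have hsub : ∀ K, {m | m ∈ U ∧ g m ≤ K}.Finite := by
    intro K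
    have : {m | m ∈ U ∧ g m ≤ K} ⊆ ⋃ n ∈ Set.Iic K, (U ∩ {m | g m = n}) := by
      intro m hm
      exact Set.mem_biUnion (show g m ∈ Set.Iic K from hm.2) ⟨hm.1, rfl⟩
    exact Set.Finite.subset
      (Set.Finite.biUnion (Set.finite_Iic K) fun n _ => Set.Subsingleton.finite (hUsel n)) this
  -- interval endpoints
  set B : ℕ → ℕ := fun t => (hsub t).toFinset.sup id + t + 1 with hBdef
  have hBlt : ∀ t, t < B t := fun t => by
    show t < (hsub t).toFinset.sup id + t + 1; omega
  have hBkey : ∀ {t m}, m ∈ U → g m ≤ t → m < B t := by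
    intro t m hmU hgm
    have hmem : m ∈ (hsub t).toFinset := (Set.Finite.mem_toFinset _).2 ⟨hmU, hgm⟩
    have := Finset.le_sup (f := id) hmem
    simp only [id] at this
    show m < (hsub t).toFinset.sup id + t + 1
    omega
  set k : ℕ → ℕ := fun i => Nat.rec 0 (fun _ ki => B ki) i with hkdef
  have hksucc : ∀ i, k (i + 1) = B (k i) := fun i => rfl
  have hkmono : StrictMono k := strictMono_nat_of_lt_succ (fun i => by rw [hksucc]; exact hBlt _)
  have hkge : ∀ i, i ≤ k i := by
    intro i
    induction i with
    | zero => exact Nat.zero_le _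
    | succ i ih => have := hBlt (k i); rw [hksucc]; omega
  have hkkey : ∀ {i m}, m ∈ U → k (i + 1) ≤ m → k i < g m := by
    intro i m hmU hle
    by_contra hc
    have := hBkey hmU (not_lt.1 hc)
    rw [← hksucc] at this
    omega
  -- index of the interval containing m
  have hexi : ∀ m : ℕ, ∃ i, m < k (i + 1) := fun m =>
    ⟨m, lt_of_lt_of_le (Nat.lt_succ_self m) (hkge (m + 1))⟩
  set idx : ℕ → ℕ := fun m => Nat.find (hexi m) with hidxdef
  have hidx1 : ∀ m, m < k (idx m + 1) := fun m => Nat.find_spec (hexi m)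
  have hidx2 : ∀ m, k (idx m) ≤ m := by
    intro m
    rcases Nat.eq_zero_or_pos (idx m) with h | h
    · rw [h]; exact Nat.zero_le m
    · have := Nat.find_min (hexi m) (show idx m - 1 < idx m by omega)
      rw [not_lt] at this
      have he : idx m - 1 + 1 = idx m := by omega
      rwa [he] at this
  have hidxmono : ∀ {n m}, n ≤ m → idx n ≤ idx m := fun {n m} h =>
    Nat.find_le (lt_of_le_of_lt h (hidx1 m))
  -- second selector, by intervals
  obtain ⟨U₂, hU₂p, hU₂sel⟩ : ∃ U₂ ∈ p, ∀ i, (U₂ ∩ {m | idx m = i}).Subsingleton := by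
    refine ramsey_selector hp idx (fun i hi => ?_)
    refine hp.1 _ (Set.Finite.subset (Set.finite_Iio (k (i + 1))) ?_) hi
    intro m hm
    rw [Set.mem_setOf_eq] at hm
    have := hidx1 m
    rw [hm] at this
    exact this
  -- fix parity
  obtain ⟨r, hrp⟩ : ∃ r, {m | idx m % 2 = r} ∈ p := by
    rcases p.mem_or_compl_mem {m | idx m % 2 = 0} with h | h
    · exact ⟨0, h⟩
    · refine ⟨1, Filter.mem_of_superset h ?_⟩
      intro m hm
      simp only [Set.mem_compl_iff, Set.mem_setOf_eq] at hm ⊢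
      omega
  refine ⟨U ∩ (U₂ ∩ {m | idx m % 2 = r}), Filter.inter_mem hUp (Filter.inter_mem hU₂p hrp),
    ?_⟩
  rintro n ⟨hnU, hnU₂, hnr⟩ m ⟨hmU, hmU₂, hmr⟩ hnm
  rw [Set.mem_setOf_eq] at hnr hmr
  have hij : idx n ≤ idx m := hidxmono (le_of_lt hnm)
  have hne : idx n ≠ idx m := by
    intro he
    exact absurd (hU₂sel (idx n) ⟨hnU₂, rfl⟩ ⟨hmU₂, he.symm⟩) (ne_of_lt hnm)
  have hpar : idx n % 2 = idx m % 2 := hnr.trans hmr.symm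
  have key2 : ∀ i j : ℕ, i < j → i % 2 = j % 2 → i + 2 ≤ j := by
    intro i j h1 h2; omega
  have hge2 : idx n + 2 ≤ idx m := key2 _ _ (lt_of_le_of_ne hij hne) hpar
  have hkm : k (idx n + 1 + 1) ≤ m :=
    le_trans (hkmono.monotone (show idx n + 1 + 1 ≤ idx m by omega)) (hidx2 m)
  have hgm : k (idx n + 1) < g m := hkkey (i := idx n + 1) hmU hkm
  have : n < g m := lt_of_lt_of_le (hidx1 n) (le_of_lt hgm)
  exact hA'sub (hglt this)

lemma ramsey_bind_range_or_map {p : Ultrafilter ℕ} (hp : IsRamsey p) (y : ℕ → Ultrafilter ℕ) :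
    p.bind y ∈ Set.range y ∨ ∃ h : ℕ → ℕ, (p.bind y).map h = p := by
  classical
  set a := p.bind y with hadef
  by_cases hc : {n | y n = a} ∈ p
  · obtain ⟨n, hn⟩ := Ultrafilter.nonempty_of_mem hc
    exact Or.inl ⟨n, hn⟩
  right
  have hB : {n | y n ≠ a} ∈ p :=
    (Ultrafilter.compl_mem_iff_notMem (f := p) (s := {n | y n = a})).2 hc
  -- a separating set for each n with y n ≠ a
  have hsep : ∀ n, y n ≠ a → ∃ C : Set ℕ, C ∈ y n ∧ C ∉ a := by
    intro n hne
    have : ¬ ((y n : Filter ℕ) ≤ (a : Filter ℕ)) := fun h =>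
      hne (Ultrafilter.coe_le_coe.1 h)
    rw [Filter.le_def] at this
    push_neg at this
    obtain ⟨s, hsa, hsn⟩ := this
    exact ⟨sᶜ, Ultrafilter.compl_mem_iff_notMem.2 hsn,
      fun h => (Ultrafilter.compl_notMem_iff.2 hsa) h⟩
  set C : ℕ → Set ℕ := fun n => if h : y n ≠ a then (hsep n h).choose else ∅ with hCdef
  have hCmem : ∀ n, y n ≠ a → C n ∈ y n := by
    intro n h; rw [hCdef]; simp only [dif_pos h]; exact (hsep n h).choose_spec.1
  have hCnot : ∀ n, y n ≠ a → C n ∉ a := by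
    intro n h; rw [hCdef]; simp only [dif_pos h]; exact (hsep n h).choose_spec.2
  -- index sets for diagonalization
  have hAn : ∀ n, (if y n ≠ a then {m | C n ∉ y m} else Set.univ) ∈ p := by
    intro n
    by_cases h : y n ≠ a
    · rw [if_pos h]
      have : {m | C n ∈ y m} ∉ p := fun hmem => hCnot n h (mem_bind_iff.2 hmem)
      have h2 : {m | C n ∈ y m}ᶜ ∈ p := Ultrafilter.compl_mem_iff_notMem.2 this
      exact h2
    · rw [if_neg h]; exact Filter.univ_mem
  obtain ⟨W', hW'p, hW'⟩ := ramsey_diagonal hp _ hAn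
  set W := W' ∩ {n | y n ≠ a} with hWdef
  have hWp : W ∈ p := Filter.inter_mem hW'p hB
  have hWsep : ∀ n ∈ W, ∀ m ∈ W, n < m → C n ∉ y m := by
    intro n hn m hm hnm
    have := hW' n hn.1 m hm.1 hnm
    rwa [if_pos (show y n ≠ a from hn.2)] at this
  -- pairwise disjoint sets T n ∈ y n
  set T : ℕ → Set ℕ := fun n => C n \ ⋃ k ∈ W ∩ Set.Iio n, C k with hTdef
  have hTmem : ∀ n ∈ W, T n ∈ y n := by
    intro n hn
    have hcompl : (⋃ k ∈ W ∩ Set.Iio n, C k)ᶜ ∈ y n := by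
      refine Ultrafilter.compl_mem_iff_notMem.2 ?_
      intro hu
      obtain ⟨k, hk, hCk⟩ := (Ultrafilter.finite_biUnion_mem_iff
        ((Set.finite_Iio n).inter_of_right _)).1 hu
      exact (hWsep k hk.1 n hn hk.2) hCk
    exact Filter.diff_mem (hCmem n hn.2) hcompl
  have hTdisj : ∀ n ∈ W, ∀ m ∈ W, n ≠ m → Disjoint (T n) (T m) := by
    intro n hn m hm hne
    rcases hne.lt_or_gt with h | h
    · refine Set.disjoint_left.2 fun j hjn hjm => ?_
      exact hjm.2 (Set.mem_biUnion ⟨hn, h⟩ hjn.1)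
    · refine Set.disjoint_left.2 fun j hjn hjm => ?_
      exact hjn.2 (Set.mem_biUnion ⟨hm, h⟩ hjm.1)
  -- the finite-to-one style map
  set h : ℕ → ℕ := fun j => if hj : ∃ n, n ∈ W ∧ j ∈ T n then hj.choose else 0 with hhdef
  have hh : ∀ n ∈ W, ∀ j ∈ T n, h j = n := by
    intro n hn j hj
    have hex : ∃ n', n' ∈ W ∧ j ∈ T n' := ⟨n, hn, hj⟩
    rw [hhdef]; simp only [dif_pos hex]
    by_contra hne
    exact Set.disjoint_left.1
      (hTdisj _ hex.choose_spec.1 n hn hne) hex.choose_spec.2 hj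
  have hkey : ∀ S ∈ p, h ⁻¹' S ∈ a := by
    intro S hS
    rw [hadef, mem_bind_iff]
    refine Filter.mem_of_superset (Filter.inter_mem hS hWp) ?_
    rintro n ⟨hnS, hnW⟩
    refine Filter.mem_of_superset (hTmem n hnW) ?_
    intro j hj
    have := hh n hnW j hj
    simp only [Set.mem_preimage, this]
    exact hnS
  refine ⟨h, Ultrafilter.coe_le_coe.1 ?_⟩
  intro S hS
  exact Ultrafilter.mem_map.2 (hkey S hS)

lemma bind_plimit (p : Ultrafilter ℕ) (y : ℕ → Ultrafilter ℕ) {V : Set (Ultrafilter ℕ)}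
    (hV : IsOpen V) (hb : p.bind y ∈ V) : {m | y m ∈ V} ∈ p := by
  obtain ⟨t, ⟨s, hs⟩, hbt, htV⟩ :=
    ultrafilterBasis_is_basis.isOpen_iff.1 hV _ hb
  have hsb : s ∈ p.bind y := by rw [← hs] at hbt; exact hbt
  refine Filter.mem_of_superset (mem_bind_iff.1 hsb) ?_
  intro m hm
  exact htV (by rw [← hs]; exact hm)

lemma card_params : Cardinal.mk (ℕ → ℕ) = Cardinal.continuum := by
  rw [Cardinal.mk_arrow]
  simp [Cardinal.power_self_eq le_rfl, Cardinal.two_power_aleph0]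

/-- If there are `2^𝔠`-many Ramsey ultrafilters, then `βω \ A` is doubly countably
compact for every `A` of size `< 2^𝔠`. -/
theorem compl_small_doubly_countably_compact_of_many_ramsey
    (hr : Cardinal.mk {u : Ultrafilter ℕ | IsRamsey u} = 2 ^ Cardinal.continuum)
    (A : Set (Ultrafilter ℕ)) (hA : Cardinal.mk A < 2 ^ Cardinal.continuum) :
    DoublyCountablyCompact ↥(Aᶜ) := by
  classical
  intro f
  set Bad : Set (Ultrafilter ℕ) := {q | ∃ a ∈ A, ∃ h : ℕ → ℕ, Ultrafilter.map h a = q}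
    with hBaddef
  have hBadlt : Cardinal.mk Bad < 2 ^ Cardinal.continuum := by
    have hsub : Bad ⊆ Set.range
        (fun x : A × (ℕ → ℕ) => Ultrafilter.map x.2 (x.1 : Ultrafilter ℕ)) := by
      rintro q ⟨a, ha, h, hq⟩
      exact ⟨⟨⟨a, ha⟩, h⟩, hq⟩
    have h1 : Cardinal.mk Bad ≤ Cardinal.mk (↥A × (ℕ → ℕ)) :=
      le_trans (Cardinal.mk_le_mk_of_subset hsub) Cardinal.mk_range_le
    have h2 : Cardinal.mk (↥A × (ℕ → ℕ)) = Cardinal.mk A * Cardinal.continuum := by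
      rw [Cardinal.mk_prod, card_params]
      simp [Cardinal.lift_id]
    have h3 : Cardinal.mk A * Cardinal.continuum < 2 ^ Cardinal.continuum := by
      refine Cardinal.mul_lt_of_lt ?_ hA ?_
      · exact le_of_lt (lt_trans Cardinal.aleph0_lt_continuum (Cardinal.cantor _))
      · exact Cardinal.cantor _
    calc Cardinal.mk Bad ≤ _ := h1
      _ = _ := h2
      _ < _ := h3
  have hnsub : ¬ ({u : Ultrafilter ℕ | IsRamsey u} ⊆ Bad) := by
    intro hsub
    have := Cardinal.mk_le_mk_of_subset hsub
    rw [hr] at this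
    exact absurd this (not_le.2 hBadlt)
  obtain ⟨p, hpR, hpB⟩ := Set.not_subset.1 hnsub
  have hpR : IsRamsey p := hpR
  have avoid : ∀ y : ℕ → Ultrafilter ℕ, p.bind y ∈ A → p.bind y ∈ Set.range y := by
    intro y hmem
    rcases ramsey_bind_range_or_map hpR y with h | ⟨h, hh⟩
    · exact h
    · exact absurd ⟨p.bind y, hmem, h, hh⟩ hpB
  set y : ℕ → ℕ → Ultrafilter ℕ := fun n m => (f n m : Ultrafilter ℕ) with hydef
  have hyA : ∀ n m, y n m ∉ A := fun n m => (f n m).2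
  set b : ℕ → Ultrafilter ℕ := fun n => p.bind (y n) with hbdef
  have hbA : ∀ n, b n ∉ A := by
    intro n hn
    obtain ⟨m, hm⟩ := avoid (y n) hn
    exact hyA n m (hm ▸ hn)
  have hxA : p.bind b ∉ A := by
    intro hx
    obtain ⟨n, hn⟩ := avoid b hx
    exact hbA n (hn ▸ hx)
  refine ⟨p, hpR.1, Set.univ, Filter.univ_mem, fun n => ⟨b n, hbA n⟩,
    ⟨p.bind b, hxA⟩, ?_, ?_⟩
  · intro n _ U hU hxnU
    obtain ⟨V, hV, hUV⟩ := isOpen_induced_iff.1 hU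
    have hbV : b n ∈ V := by rw [← hUV] at hxnU; exact hxnU
    have h1 := bind_plimit p (y n) hV hbV
    refine Filter.mem_of_superset (Filter.inter_mem (free_Ioi_mem hpR.1 n) h1) ?_
    rintro m ⟨hm1, hm2⟩
    exact ⟨hm1, by rw [← hUV]; exact hm2⟩
  · intro U hU hxU
    obtain ⟨V, hV, hUV⟩ := isOpen_induced_iff.1 hU
    have hxV : p.bind b ∈ V := by rw [← hUV] at hxU; exact hxU
    refine Filter.mem_of_superset (bind_plimit p b hV hxV) ?_
    intro n hn
    exact ⟨Set.mem_univ n, by rw [← hUV]; exact hn⟩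
end
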